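/- arXiv:2010.06898 — 3 statements merged into one kernel-verified Lean document; each statement's English description precedes it below -/
import Mathlib

section
/- Let σ = (a b; c d) be a matrix with entries in a complete nonarchimedean valuation ring R with uniformizer ϖ, satisfying c ∈ (ϖ), a ∈ R^×, and det σ ≠ 0. Then the weight-two action (σ·f)(x) = (ad−bc)(a−cx)^{-2} f((dx−b)/(a−cx)) preserves the subring Λ = R[[ϖx]] ⊆ R[[x]] of power series converging on the open ball of radius |ϖ|: if f ∈ Λ, then σ·f is a well-defined element of Λ. Moreover, if det σ = ϖ·u with u ∈ R^×, then σ·f ∈ ϖΛ. -/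
/-!
Expanding `(a - c x)^{-(n+2)} = a^{-(n+2)} ∑ₖ C(k+n+1, n+1) (c/a)ᵏ xᵏ` and `(d x - b)ⁿ`
binomially turns the `n`-th term `fₙ (d x - b)ⁿ / (a - c x)^{n+2}` into a power series whose
`m`-th coefficient has norm at most `‖ϖ‖^max(n, m)`: only `c` is small, every other entry is
integral. For `‖x‖ < ‖ϖ‖⁻¹` the doubly indexed terms therefore tend to zero, so in the complete
ultrametric field they are unconditionally summable and both orders of summation agree; summing
over `n` first gives the coefficients `gₘ`, of norm at most `‖ad - bc‖ ‖ϖ‖ᵐ`.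
-/

open Filter Topology Finset

theorem tendsto_max_cofinite_atTop :
    Tendsto (fun p : ℕ × ℕ => max p.1 p.2) cofinite atTop := by
  rw [← Nat.cofinite_eq_atTop]
  refine Tendsto.cofinite_of_finite_preimage_singleton fun N => ?_
  refine (((Set.finite_Iic N).prod (Set.finite_Iic N)).subset fun p hp => ?_).to_subtype
  simp only [Set.mem_preimage, Set.mem_singleton_iff] at hp
  exact ⟨hp ▸ le_max_left p.1 p.2, hp ▸ le_max_right p.1 p.2⟩

theorem pow_mul_pow_le_max_pow {r t : ℝ} (hr : 0 ≤ r) (ht : 0 ≤ t) {m N : ℕ} (h : m ≤ N) :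
    r ^ N * t ^ m ≤ max r (r * t) ^ N := by
  calc r ^ N * t ^ m = r ^ (N - m) * (r * t) ^ m := by
        rw [mul_pow, ← mul_assoc, ← pow_add, Nat.sub_add_cancel h]
    _ ≤ max r (r * t) ^ (N - m) * max r (r * t) ^ m := by gcongr <;> simp
    _ = max r (r * t) ^ N := by rw [← pow_add, Nat.sub_add_cancel h]

section Ultrametric

variable {E : Type*} [NormedAddCommGroup E] [IsUltrametricDist E] [CompleteSpace E]

theorem summable_of_norm_le_pow_max {T : ℕ × ℕ → E} {q : ℝ} (hq0 : 0 ≤ q) (hq1 : q < 1)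
    (hT : ∀ p, ‖T p‖ ≤ q ^ max p.1 p.2) : Summable T :=
  NonarchimedeanAddGroup.summable_of_tendsto_cofinite_zero <| squeeze_zero_norm hT <|
    (tendsto_pow_atTop_nhds_zero_of_lt_one hq0 hq1).comp tendsto_max_cofinite_atTop

theorem HasSum.mul_antidiagonal_of_ultrametric {R : Type*} [NormedRing R] [IsUltrametricDist R]
    [CompleteSpace R] {u v : ℕ → R} {P Q : R} (hu : HasSum u P) (hv : HasSum v Q) :
    HasSum (fun m => ∑ kl ∈ antidiagonal m, u kl.1 * v kl.2) (P * Q) := by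
  have huv : Summable fun p : ℕ × ℕ => u p.1 * v p.2 :=
    NonarchimedeanAddGroup.summable_of_tendsto_cofinite_zero <|
      tendsto_mul_cofinite_nhds_zero hu.summable.tendsto_cofinite_zero
        hv.summable.tendsto_cofinite_zero
  have h := (HasAntidiagonal.sigmaAntidiagonalEquivProd (A := ℕ)).hasSum_iff.mpr (hu.mul hv huv)
  refine h.sigma fun m => ?_
  rw [← Finset.sum_coe_sort]
  exact hasSum_fintype _

end Ultrametric

theorem Summable.hasSum_of_hasSum_fiberwise {α β γ : Type*} [AddCommMonoid α] [TopologicalSpace α]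
    [ContinuousAdd α] [T3Space α] {T : β × γ → α} (hT : Summable T) {r : β → α} {s : γ → α}
    (hr : ∀ b, HasSum (fun c => T (b, c)) (r b)) (hs : ∀ c, HasSum (fun b => T (b, c)) (s c)) :
    HasSum s (∑' b, r b) := by
  rw [(hT.hasSum.prod_fiberwise hr).tsum_eq]
  exact ((Equiv.prodComm γ β).hasSum_iff.mpr hT.hasSum).prod_fiberwise hs

namespace WeightTwo

variable {K : Type*} [NormedField K]

def numeratorCoeff (b d : K) (n j : ℕ) : K :=
  n.choose j * d ^ j * (-b) ^ (n - j)

def denominatorCoeff (a c : K) (n k : ℕ) : K :=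
  (k + (n + 1)).choose (n + 1) * (c / a) ^ k

def mobiusCoeff (a b c d : K) (n m : ℕ) : K :=
  a⁻¹ ^ (n + 2) * ∑ jk ∈ antidiagonal m, numeratorCoeff b d n jk.1 * denominatorCoeff a c n jk.2

noncomputable def weightTwoCoeff (a b c d : K) (f : ℕ → K) (m : ℕ) : K :=
  (a * d - b * c) * ∑' n, f n * mobiusCoeff a b c d n m

theorem numeratorCoeff_eq_zero_of_lt (b d : K) {n j : ℕ} (h : n < j) :
    numeratorCoeff b d n j = 0 := by
  simp [numeratorCoeff, Nat.choose_eq_zero_of_lt h]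

theorem hasSum_numeratorCoeff (b d x : K) (n : ℕ) :
    HasSum (fun j => numeratorCoeff b d n j * x ^ j) ((d * x - b) ^ n) := by
  have h := hasSum_sum_of_ne_finset_zero (L := .unconditional ℕ)
    (f := fun j => numeratorCoeff b d n j * x ^ j) (s := range (n + 1)) fun j hj => by
      rw [numeratorCoeff_eq_zero_of_lt b d (by simpa using hj), zero_mul]
  convert h using 1
  rw [sub_eq_add_neg, add_pow]
  refine Finset.sum_congr rfl fun j _ => ?_
  rw [numeratorCoeff]
  ring

theorem hasSum_denominatorCoeff {a c x : K} (h : ‖c * x / a‖ < 1) (n : ℕ) :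
    HasSum (fun k => denominatorCoeff a c n k * x ^ k) ((1 - c * x / a) ^ (n + 2))⁻¹ := by
  convert hasSum_choose_mul_geometric_of_norm_lt_one (n + 1) h using 1
  · ext k
    rw [denominatorCoeff, mul_assoc, ← mul_pow, div_mul_eq_mul_div]
  · rw [one_div]

theorem hasSum_mobiusCoeff [IsUltrametricDist K] [CompleteSpace K] {a c x : K} (ha : a ≠ 0)
    (h : ‖c * x / a‖ < 1) (b d : K) (n : ℕ) :
    HasSum (fun m => mobiusCoeff a b c d n m * x ^ m)
      ((a - c * x)⁻¹ ^ 2 * ((d * x - b) / (a - c * x)) ^ n) := by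
  have hval : a⁻¹ ^ (n + 2) * ((d * x - b) ^ n * ((1 - c * x / a) ^ (n + 2))⁻¹) =
      (a - c * x)⁻¹ ^ 2 * ((d * x - b) / (a - c * x)) ^ n := by
    have hfac : a * (1 - c * x / a) = a - c * x := by field_simp
    calc a⁻¹ ^ (n + 2) * ((d * x - b) ^ n * ((1 - c * x / a) ^ (n + 2))⁻¹)
        = (d * x - b) ^ n * ((a * (1 - c * x / a)) ^ (n + 2))⁻¹ := by
          rw [mul_pow, mul_inv, inv_pow]; ring
      _ = _ := by rw [hfac, pow_add, mul_inv, div_pow, inv_pow]; ring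
  rw [← hval]
  refine (((hasSum_numeratorCoeff b d x n).mul_antidiagonal_of_ultrametric
    (hasSum_denominatorCoeff h n)).mul_left (a⁻¹ ^ (n + 2))).congr_fun fun m => ?_
  rw [mobiusCoeff, mul_assoc, Finset.sum_mul]
  congr 1
  refine Finset.sum_congr rfl fun jk hjk => ?_
  rw [← mem_antidiagonal.mp hjk, pow_add]
  ring

section Bounds

variable [IsUltrametricDist K] {a b c d : K} {r : ℝ}

theorem norm_numeratorCoeff_le (hb : ‖b‖ ≤ 1) (hd : ‖d‖ ≤ 1) (n j : ℕ) :
    ‖numeratorCoeff b d n j‖ ≤ 1 := by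
  rw [numeratorCoeff, norm_mul, norm_mul, norm_pow, norm_pow, norm_neg]
  exact mul_le_one₀ (mul_le_one₀ (IsUltrametricDist.norm_natCast_le_one K _) (by positivity)
    (pow_le_one₀ (norm_nonneg _) hd)) (by positivity) (pow_le_one₀ (norm_nonneg _) hb)

theorem norm_denominatorCoeff_le (ha : ‖a‖ = 1) (hc : ‖c‖ ≤ r) (n k : ℕ) :
    ‖denominatorCoeff a c n k‖ ≤ r ^ k := by
  rw [denominatorCoeff, norm_mul, norm_pow, norm_div, ha, div_one]
  exact (mul_le_of_le_one_left (by positivity) (IsUltrametricDist.norm_natCast_le_one K _)).trans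
    (pow_le_pow_left₀ (norm_nonneg _) hc k)

theorem norm_mobiusCoeff_le (ha : ‖a‖ = 1) (hb : ‖b‖ ≤ 1) (hd : ‖d‖ ≤ 1) (hc : ‖c‖ ≤ r)
    (hr : r ≤ 1) (n m : ℕ) : ‖mobiusCoeff a b c d n m‖ ≤ r ^ (m - n) := by
  have hr0 : 0 ≤ r := (norm_nonneg c).trans hc
  rw [mobiusCoeff, norm_mul, norm_pow, norm_inv, ha, inv_one, one_pow, one_mul]
  refine IsUltrametricDist.norm_sum_le_of_forall_le_of_nonneg (by positivity) fun jk hjk => ?_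
  rcases le_or_gt jk.1 n with hj | hj
  · rw [norm_mul]
    calc ‖numeratorCoeff b d n jk.1‖ * ‖denominatorCoeff a c n jk.2‖ ≤ 1 * r ^ jk.2 :=
          mul_le_mul (norm_numeratorCoeff_le hb hd n _) (norm_denominatorCoeff_le ha hc n _)
            (norm_nonneg _) zero_le_one
      _ ≤ r ^ (m - n) := by
          rw [one_mul]
          exact pow_le_pow_of_le_one hr0 hr (by have := mem_antidiagonal.mp hjk; omega)
  · rw [numeratorCoeff_eq_zero_of_lt b d hj, zero_mul, norm_zero]
    positivity

theorem norm_mul_mobiusCoeff_le {f : ℕ → K} (hf : ∀ n, ‖f n‖ ≤ r ^ n) (ha : ‖a‖ = 1)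
    (hb : ‖b‖ ≤ 1) (hd : ‖d‖ ≤ 1) (hc : ‖c‖ ≤ r) (hr : r ≤ 1) (n m : ℕ) :
    ‖f n * mobiusCoeff a b c d n m‖ ≤ r ^ max n m := by
  rw [norm_mul, ← add_tsub_eq_max, pow_add]
  exact mul_le_mul (hf n) (norm_mobiusCoeff_le ha hb hd hc hr n m) (norm_nonneg _)
    ((norm_nonneg _).trans (hf n))

theorem norm_weightTwoCoeff_le {f : ℕ → K} (hf : ∀ n, ‖f n‖ ≤ r ^ n) (ha : ‖a‖ = 1)
    (hb : ‖b‖ ≤ 1) (hd : ‖d‖ ≤ 1) (hc : ‖c‖ ≤ r) (hr : r ≤ 1) (m : ℕ) :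
    ‖weightTwoCoeff a b c d f m‖ ≤ ‖a * d - b * c‖ * r ^ m := by
  have hr0 : 0 ≤ r := (norm_nonneg c).trans hc
  rw [weightTwoCoeff, norm_mul]
  gcongr
  refine IsUltrametricDist.norm_tsum_le_of_forall_le_of_nonneg (by positivity) fun n => ?_
  exact (norm_mul_mobiusCoeff_le hf ha hb hd hc hr n m).trans
    (pow_le_pow_of_le_one hr0 hr (le_max_right n m))

theorem norm_mul_sub_mul_le_one (ha : ‖a‖ ≤ 1) (hb : ‖b‖ ≤ 1) (hc : ‖c‖ ≤ 1) (hd : ‖d‖ ≤ 1) :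
    ‖a * d - b * c‖ ≤ 1 := by
  rw [sub_eq_add_neg]
  refine (IsUltrametricDist.norm_add_le_max _ _).trans (max_le ?_ ?_)
  · rw [norm_mul]; exact mul_le_one₀ ha (norm_nonneg _) hd
  · rw [norm_neg, norm_mul]; exact mul_le_one₀ hb (norm_nonneg _) hc

end Bounds

theorem hasSum_weightTwoCoeff [IsUltrametricDist K] [CompleteSpace K] {a b c d : K} {r : ℝ}
    {f : ℕ → K} (hf : ∀ n, ‖f n‖ ≤ r ^ n) (ha : ‖a‖ = 1) (hb : ‖b‖ ≤ 1) (hd : ‖d‖ ≤ 1)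
    (hc : ‖c‖ ≤ r) (hr : r < 1) {x : K} (hx : ‖x‖ < r⁻¹) :
    HasSum (fun m => weightTwoCoeff a b c d f m * x ^ m)
      ((a * d - b * c) * (a - c * x)⁻¹ ^ 2 * ∑' n, f n * ((d * x - b) / (a - c * x)) ^ n) := by
  have hr0 : 0 < r := inv_pos.mp ((norm_nonneg x).trans_lt hx)
  have hrx : r * ‖x‖ < 1 := (lt_inv_mul_iff₀ hr0).mp (by rwa [mul_one])
  have hcx : ‖c * x / a‖ < 1 := by
    rw [norm_div, ha, div_one, norm_mul]
    exact (mul_le_mul_of_nonneg_right hc (norm_nonneg x)).trans_lt hrx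
  set T : ℕ × ℕ → K := fun p => f p.1 * mobiusCoeff a b c d p.1 p.2 * x ^ p.2
  have hT : Summable T := by
    refine summable_of_norm_le_pow_max (by positivity) (max_lt hr hrx) fun p => ?_
    rw [norm_mul, norm_pow]
    exact (mul_le_mul_of_nonneg_right (norm_mul_mobiusCoeff_le hf ha hb hd hc hr.le _ _)
      (by positivity)).trans (pow_mul_pow_le_max_pow hr0.le (norm_nonneg x) (le_max_right _ _))
  have hrows : ∀ n, HasSum (fun m => T (n, m))
      (f n * ((a - c * x)⁻¹ ^ 2 * ((d * x - b) / (a - c * x)) ^ n)) := fun n =>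
    ((hasSum_mobiusCoeff (norm_ne_zero_iff.mp (ha ▸ one_ne_zero)) hcx b d n).mul_left
      (f n)).congr_fun fun m => mul_assoc _ _ _
  have hcols : ∀ m, HasSum (fun n => T (n, m)) ((∑' n, f n * mobiusCoeff a b c d n m) * x ^ m) :=
    fun m => by
      rw [← tsum_mul_right]
      exact (hT.comp_injective (Prod.mk_left_injective m)).hasSum
  rw [mul_assoc, ← tsum_mul_left]
  simp_rw [mul_left_comm _ (f _)]
  exact ((hT.hasSum_of_hasSum_fiberwise hrows hcols).mul_left (a * d - b * c)).congr_fun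
    fun m => mul_assoc _ _ _

end WeightTwo

open WeightTwo

theorem weight_two_action_preserves_Lambda_general {K : Type*} [NontriviallyNormedField K]
    [CompleteSpace K] [IsUltrametricDist K]
    (ϖ a b c d : K) (hϖ1 : ‖ϖ‖ < 1)
    (ha : ‖a‖ = 1) (hb : ‖b‖ ≤ 1) (hd : ‖d‖ ≤ 1) (hc : ‖c‖ ≤ ‖ϖ‖)
    (f : ℕ → K) (hf : ∀ n : ℕ, ‖f n‖ ≤ ‖ϖ‖ ^ n) :
    ∃ g : ℕ → K,
      (∀ n : ℕ, ‖g n‖ ≤ ‖ϖ‖ ^ n) ∧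
      (∀ x : K, ‖x‖ < ‖ϖ‖⁻¹ →
        HasSum (fun n : ℕ => g n * x ^ n)
          ((a * d - b * c) * ((a - c * x)⁻¹) ^ 2 *
            ∑' n : ℕ, f n * ((d * x - b) / (a - c * x)) ^ n)) ∧
      (‖a * d - b * c‖ = ‖ϖ‖ → ∀ n : ℕ, ‖g n‖ ≤ ‖ϖ‖ ^ (n + 1)) := by
  have hcoeff := norm_weightTwoCoeff_le hf ha hb hd hc hϖ1.le
  refine ⟨weightTwoCoeff a b c d f, fun n => (hcoeff n).trans ?_,
    fun x hx => hasSum_weightTwoCoeff hf ha hb hd hc hϖ1 hx, fun hΔ n => ?_⟩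
  · exact mul_le_of_le_one_left (by positivity)
      (norm_mul_sub_mul_le_one ha.le hb (hc.trans hϖ1.le) hd)
  · rw [pow_succ']
    exact hΔ ▸ hcoeff n

/-- The weight-two action `(σ·f)(x) = (ad−bc)(a−cx)^{-2} f((dx−b)/(a−cx))` of a matrix
`σ = (a b; c d)` with `c ∈ (ϖ)`, `a ∈ R^×`, `det σ ≠ 0` preserves the module
`Λ = R[[ϖx]]` of power series whose `n`-th coefficient has norm at most `‖ϖ‖ⁿ`;
moreover if `det σ = ϖ·(unit)` then `σ·f ∈ ϖΛ`. -/
theorem weight_two_action_preserves_Lambda {K : Type*} [NontriviallyNormedField K]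
    [CompleteSpace K] [IsUltrametricDist K]
    (ϖ a b c d : K) (hϖ0 : 0 < ‖ϖ‖) (hϖ1 : ‖ϖ‖ < 1)
    (ha : ‖a‖ = 1) (hb : ‖b‖ ≤ 1) (hd : ‖d‖ ≤ 1) (hc : ‖c‖ ≤ ‖ϖ‖)
    (hdet : a * d - b * c ≠ 0)
    (f : ℕ → K) (hf : ∀ n : ℕ, ‖f n‖ ≤ ‖ϖ‖ ^ n) :
    ∃ g : ℕ → K,
      (∀ n : ℕ, ‖g n‖ ≤ ‖ϖ‖ ^ n) ∧
      (∀ x : K, ‖x‖ < ‖ϖ‖⁻¹ →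
        HasSum (fun n : ℕ => g n * x ^ n)
          ((a * d - b * c) * ((a - c * x)⁻¹) ^ 2 *
            ∑' n : ℕ, f n * ((d * x - b) / (a - c * x)) ^ n)) ∧
      (‖a * d - b * c‖ = ‖ϖ‖ → ∀ n : ℕ, ‖g n‖ ≤ ‖ϖ‖ ^ (n + 1)) :=
  weight_two_action_preserves_Lambda_general ϖ a b c d hϖ1 ha hb hd hc f hf
end

section
/- Let G be a group, H ≤ G a finite-index subgroup, and {h_t}_{t∈T} a finite set of elements of a monoid acting on a G-module V such that for each t ∈ T and γ ∈ H there exist unique b(t,γ) ∈ T and s_t(γ) ∈ H with h_t·s_t(γ) = γ·h_{b(t,γ)}. If φ : H → V is a 1-cocycle, then the map (Uφ)(γ) := Σ_{t∈T} h_t·φ(s_t(γ)) is again a 1-cocycle of H with values in V. -/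
/-- Abstract double-coset (Hecke / `U_p`) operator on 1-cocycles: if
`h_t · s_t(γ) = γ · h_{b(t,γ)}` with `(b(t,γ), s_t(γ))` unique, and `φ : H → V` is a
1-cocycle of a finite-index subgroup `H ≤ G`, then `(Uφ)(γ) = Σ_t h_t · φ(s_t(γ))`
is again a 1-cocycle of `H`. -/
theorem hecke_operator_cocycle {G M V : Type*} [Group G] [Monoid M]
    [AddCommGroup V] [DistribMulAction M V]
    (H : Subgroup G) [H.FiniteIndex]
    (ι : G →* M)
    (T : Type*) [Fintype T]
    (h : T → M) (b : T → H → T) (s : T → H → H)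
    (hrel : ∀ (t : T) (γ : H), h t * ι (s t γ : G) = ι (γ : G) * h (b t γ))
    (huniq : ∀ (t : T) (γ : H) (t' : T) (γ' : H),
      h t * ι (γ' : G) = ι (γ : G) * h t' → t' = b t γ ∧ γ' = s t γ)
    (φ : H → V) (hφ : ∀ γ₁ γ₂ : H, φ (γ₁ * γ₂) = φ γ₁ + ι (γ₁ : G) • φ γ₂)
    (Uφ : H → V) (hU : ∀ γ : H, Uφ γ = ∑ t : T, h t • φ (s t γ)) :
    ∀ γ₁ γ₂ : H, Uφ (γ₁ * γ₂) = Uφ γ₁ + ι (γ₁ : G) • Uφ γ₂ := by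
  -- composition law for `b` and `s`
  have key : ∀ (γ₁ γ₂ : H) (t : T),
      b t (γ₁ * γ₂) = b (b t γ₁) γ₂ ∧ s t (γ₁ * γ₂) = s t γ₁ * s (b t γ₁) γ₂ := by
    intro γ₁ γ₂ t
    have hc : h t * ι ((s t γ₁ * s (b t γ₁) γ₂ : H) : G)
        = ι ((γ₁ * γ₂ : H) : G) * h (b (b t γ₁) γ₂) := by
      push_cast
      rw [map_mul, map_mul, ← mul_assoc, hrel, mul_assoc, hrel, ← mul_assoc]
    have := huniq t (γ₁ * γ₂) (b (b t γ₁) γ₂) (s t γ₁ * s (b t γ₁) γ₂) hc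
    exact ⟨this.1.symm, this.2.symm⟩
  have hb1 : ∀ t : T, b t 1 = t := by
    intro t
    have := huniq t 1 t 1 (by simp)
    exact this.1.symm
  have hbcomp : ∀ (γ₁ γ₂ : H) (t : T), b t (γ₁ * γ₂) = b (b t γ₁) γ₂ :=
    fun γ₁ γ₂ t => (key γ₁ γ₂ t).1
  intro γ₁ γ₂
  -- the bijection `t ↦ b t γ₁`
  have e : Function.Bijective (fun t => b t γ₁) := by
    have hli : ∀ (γ : H) (t : T), b (b t γ) γ⁻¹ = t := by
      intro γ t
      rw [← hbcomp, mul_inv_cancel, hb1]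
    exact Function.bijective_iff_has_inverse.mpr
      ⟨fun t => b t γ₁⁻¹, hli γ₁, fun t => by
        have := hli γ₁⁻¹ t; rwa [inv_inv] at this⟩
  rw [hU, hU, hU, Finset.smul_sum,
    ← Function.Bijective.sum_comp e (fun t => ι (γ₁ : G) • h t • φ (s t γ₂)),
    ← Finset.sum_add_distrib]
  apply Finset.sum_congr rfl
  intro t _
  rw [(key γ₁ γ₂ t).2, hφ, smul_add, smul_smul, smul_smul, hrel]
end

section
/- The polynomial 41177889x⁴ + 7867012x³ + 33058502x² + 7867012x + 41177889 is a reciprocal (palindromic) polynomial, its leading coefficient factors as 3⁴·23²·31², and it is irreducible over ℚ. -/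
/-!
Write `P = aX⁴ + bX³ + cX² + bX + a`. Since `P(x) = x² T(x + x⁻¹)` with `T = aY² + bY + (c - 2a)`,
a monic quadratic factor `X² + pX + q` of `P` is either self-reciprocal (`q = 1`), and then `-p`
is a root of `T`, so `discrim a b (c - 2a)` is a square; or its cofactor is its reciprocal
`qX² + pX + 1` up to the scalar `a`, and then eliminating `p` shows that `q` is a root of another
palindromic quartic, the resolvent. For the polynomial at hand, `P` and its resolvent are
positive on `ℚ` and the discriminant `8181720914329600` is not a square.
-/

open Polynomial

namespace Polynomial

section CommRing

variable {R : Type*} [CommRing R]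

noncomputable def quartic (e₄ e₃ e₂ e₁ e₀ : R) : R[X] :=
  C e₄ * X ^ 4 + C e₃ * X ^ 3 + C e₂ * X ^ 2 + C e₁ * X + C e₀

/-- If `X² + pX + q` and `qX² + pX + 1` are the two factors of `quartic a b c b a` (up to the
scalar `a`), then `q` is a root of `palindromicResolvent a b c`. -/
noncomputable def palindromicResolvent (a b c : R) : R[X] :=
  quartic (a ^ 2) (2 * a ^ 2 - a * c) (2 * a ^ 2 + b ^ 2 - 2 * a * c) (2 * a ^ 2 - a * c) (a ^ 2)

section Coeff

variable (e₄ e₃ e₂ e₁ e₀ : R)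

@[simp] lemma coeff_quartic_zero : (quartic e₄ e₃ e₂ e₁ e₀).coeff 0 = e₀ := by simp [quartic]
@[simp] lemma coeff_quartic_one : (quartic e₄ e₃ e₂ e₁ e₀).coeff 1 = e₁ := by simp [quartic]
@[simp] lemma coeff_quartic_two : (quartic e₄ e₃ e₂ e₁ e₀).coeff 2 = e₂ := by simp [quartic]
@[simp] lemma coeff_quartic_three : (quartic e₄ e₃ e₂ e₁ e₀).coeff 3 = e₃ := by simp [quartic]
@[simp] lemma coeff_quartic_four : (quartic e₄ e₃ e₂ e₁ e₀).coeff 4 = e₄ := by simp [quartic]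

lemma natDegree_quartic [Nontrivial R] (h : e₄ ≠ 0) :
    (quartic e₄ e₃ e₂ e₁ e₀).natDegree = 4 := by
  unfold quartic
  compute_degree!

lemma leadingCoeff_quartic [Nontrivial R] (h : e₄ ≠ 0) :
    (quartic e₄ e₃ e₂ e₁ e₀).leadingCoeff = e₄ := by
  rw [leadingCoeff, natDegree_quartic _ _ _ _ _ h, coeff_quartic_four]

end Coeff

lemma quartic_eq_quartic_iff {a₄ a₃ a₂ a₁ a₀ b₄ b₃ b₂ b₁ b₀ : R} :
    quartic a₄ a₃ a₂ a₁ a₀ = quartic b₄ b₃ b₂ b₁ b₀ ↔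
      a₄ = b₄ ∧ a₃ = b₃ ∧ a₂ = b₂ ∧ a₁ = b₁ ∧ a₀ = b₀ := by
  refine ⟨fun h ↦ ?_, by rintro ⟨rfl, rfl, rfl, rfl, rfl⟩; rfl⟩
  have hcoeff (n : ℕ) := congrArg (coeff · n) h
  exact ⟨by simpa using hcoeff 4, by simpa using hcoeff 3, by simpa using hcoeff 2,
    by simpa using hcoeff 1, by simpa using hcoeff 0⟩

lemma coeff_quartic_palindromic (a b c : R) {i : ℕ} (hi : i ≤ 4) :
    (quartic a b c b a).coeff i = (quartic a b c b a).coeff (4 - i) := by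
  interval_cases i <;> simp

lemma quadratic_mul_quadratic (p q g₂ g₁ g₀ : R) :
    (X ^ 2 + C p * X + C q) * (C g₂ * X ^ 2 + C g₁ * X + C g₀) =
      quartic g₂ (g₁ + p * g₂) (g₀ + p * g₁ + q * g₂) (p * g₀ + q * g₁) (q * g₀) := by
  simp only [quartic, map_add, map_mul]
  ring

lemma eq_quadratic_of_natDegree_le_two {f : R[X]} (h : f.natDegree ≤ 2) :
    f = C (f.coeff 2) * X ^ 2 + C (f.coeff 1) * X + C (f.coeff 0) := by
  rw [as_sum_range_C_mul_X_pow' f (n := 3) (by omega)]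
  simp [Finset.sum_range_succ]
  ring

lemma isSquare_discrim_or_isRoot_palindromicResolvent [IsDomain R] {a b c p q g₁ g₀ : R}
    (h : (X ^ 2 + C p * X + C q) * (C a * X ^ 2 + C g₁ * X + C g₀) = quartic a b c b a) :
    IsSquare (discrim a b (c - 2 * a)) ∨ (palindromicResolvent a b c).IsRoot q := by
  rw [quadratic_mul_quadratic, quartic_eq_quartic_iff] at h
  obtain ⟨-, h₃, h₂, h₁, h₀⟩ := h
  have hcases : (q - 1) * (p * a - q * g₁) = 0 := by
    linear_combination q * h₃ - q * h₁ + p * h₀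
  rcases mul_eq_zero.mp hcases with hq | hpq
  · refine .inl ⟨2 * a * p - b, ?_⟩
    obtain rfl : q = 1 := by linear_combination hq
    obtain rfl : g₀ = a := by linear_combination h₀
    subst h₂ h₃
    rw [discrim]
    ring
  · right
    simp only [palindromicResolvent, quartic, IsRoot, eval_add, eval_mul, eval_pow, eval_C, eval_X]
    linear_combination -(b * q + p * a * (q + 1)) * (q * h₃ + hpq) +
      a * (q + 1) ^ 2 * (q * h₂ - h₀ + p * hpq)

end CommRing

theorem irreducible_quartic_palindromic {K : Type*} [Field K] {a b c : K} (ha : a ≠ 0)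
    (hroot : ∀ x, ¬ (quartic a b c b a).IsRoot x)
    (hdiscrim : ¬ IsSquare (discrim a b (c - 2 * a)))
    (hresolvent : ∀ q, ¬ (palindromicResolvent a b c).IsRoot q) :
    Irreducible (quartic a b c b a) := by
  set P := quartic a b c b a
  have hdeg : P.natDegree = 4 := natDegree_quartic _ _ _ _ _ ha
  have hP0 : P ≠ 0 := ne_zero_of_natDegree_gt (n := 0) (by omega)
  have hPunit : ¬ IsUnit P := fun h ↦ by simpa [hdeg] using natDegree_eq_zero_of_isUnit h
  rw [irreducible_iff_lt_natDegree_lt hP0 hPunit, hdeg]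
  rintro Q hQ hQdeg ⟨g, hg⟩
  obtain hQ1 | hQ2 : Q.natDegree = 1 ∨ Q.natDegree = 2 := by simp at hQdeg; omega
  · refine hroot (-Q.coeff 0) ?_
    rw [IsRoot, hg, hQ.eq_X_add_C hQ1]
    simp
  have hg0 : g ≠ 0 := right_ne_zero_of_mul (hg ▸ hP0)
  have hgdeg : g.natDegree = 2 := by
    have := congrArg natDegree hg
    rw [hQ.natDegree_mul' hg0, hdeg] at this
    omega
  have hga : g.coeff 2 = a := by
    rw [← hgdeg, ← leadingCoeff, ← leadingCoeff_monic_mul hQ, ← hg,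
      leadingCoeff_quartic _ _ _ _ _ ha]
  have hQ2' : Q.coeff 2 = 1 := hQ2 ▸ hQ
  rw [eq_quadratic_of_natDegree_le_two hQ2.le, eq_quadratic_of_natDegree_le_two hgdeg.le,
    hQ2', hga, C_1, one_mul] at hg
  rcases isSquare_discrim_or_isRoot_palindromicResolvent hg.symm with h | h
  · exact hdiscrim h
  · exact hresolvent _ h

section Ordered

variable {R : Type*} [CommRing R] [LinearOrder R] [IsStrictOrderedRing R]

/-- The trace quadratic `aY² + bY + (c - 2a)` is monotone on `Y ≥ 2` and antitone on `Y ≤ -2`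
when `|b| ≤ 4a`, so it is positive there as soon as it is positive at `±2`. -/
lemma eval_quartic_palindromic_pos {a b c : R} (ha : 0 < a) (hb : |b| ≤ 4 * a)
    (hpos₁ : 0 < 2 * a + 2 * b + c) (hneg₁ : 0 < 2 * a - 2 * b + c) (x : R) :
    0 < (quartic a b c b a).eval x := by
  obtain ⟨hb₁, hb₂⟩ := abs_le.mp hb
  rcases lt_trichotomy x 0 with hx | rfl | hx
  · have hfac : 0 ≤ a * (x - 1) ^ 2 + b * x := by nlinarith [sq_nonneg (x + 1)]
    have heval : (quartic a b c b a).eval x =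
        x ^ 2 * (2 * a - 2 * b + c) + (x + 1) ^ 2 * (a * (x - 1) ^ 2 + b * x) := by
      simp only [quartic, eval_add, eval_mul, eval_pow, eval_C, eval_X]
      ring
    rw [heval]
    exact add_pos_of_pos_of_nonneg (mul_pos (sq_pos_of_neg hx) hneg₁)
      (mul_nonneg (sq_nonneg _) hfac)
  · simpa [quartic] using ha
  · have hfac : 0 ≤ a * (x + 1) ^ 2 + b * x := by nlinarith [sq_nonneg (x - 1)]
    have heval : (quartic a b c b a).eval x =
        x ^ 2 * (2 * a + 2 * b + c) + (x - 1) ^ 2 * (a * (x + 1) ^ 2 + b * x) := by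
      simp only [quartic, eval_add, eval_mul, eval_pow, eval_C, eval_X]
      ring
    rw [heval]
    exact add_pos_of_pos_of_nonneg (mul_pos (sq_pos_of_pos hx) hpos₁)
      (mul_nonneg (sq_nonneg _) hfac)

end Ordered

end Polynomial

/-- The polynomial `41177889x⁴ + 7867012x³ + 33058502x² + 7867012x + 41177889` is
reciprocal (palindromic), its leading coefficient factors as `3⁴·23²·31²`, and it is
irreducible over `ℚ`. -/
theorem period_polynomial_properties :
    let P : Polynomial ℚ :=
      C 41177889 * X ^ 4 + C 7867012 * X ^ 3 + C 33058502 * X ^ 2 +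
        C 7867012 * X + C 41177889
    (∀ i : ℕ, i ≤ 4 → P.coeff i = P.coeff (4 - i)) ∧
    P.leadingCoeff = 3 ^ 4 * 23 ^ 2 * 31 ^ 2 ∧
    Irreducible P := by
  intro P
  have hP : P = quartic 41177889 7867012 33058502 7867012 41177889 := rfl
  rw [hP]
  refine ⟨fun i ↦ coeff_quartic_palindromic _ _ _, ?_, ?_⟩
  · rw [leadingCoeff_quartic _ _ _ _ _ (by norm_num)]
    norm_num
  refine irreducible_quartic_palindromic (by norm_num) (fun x ↦ ?_) (by norm_num [discrim])
    (fun q ↦ ?_)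
  · exact (eval_quartic_palindromic_pos (by norm_num) (by norm_num [abs_le]) (by norm_num)
      (by norm_num) x).ne'
  · exact (eval_quartic_palindromic_pos (by norm_num) (by norm_num [abs_le]) (by norm_num)
      (by norm_num) q).ne'
end
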